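/- Let S be a finite set of distinct lines z ↦ a + b·z (a,b ∈ ℕ) with |S| even, and let L₀ = a₀ + b₀·z be a line of S with maximal slope b₀. For c ∈ ℕ define B_c = {f ∈ S : f(c) < a₀ + b₀·c}. If column c and column c+1 are both bad for S (every point on the column lies on an even number of lines from S), then |B_{c+1}| ≥ |B_c| + 2. -/

import Mathlib

/-!
Since the line `L₀` has maximal slope, a line below `L₀` at column `c` stays below it at
column `c + 1`, so `B_c ⊆ B_{c+1}`. Column `c` being bad, the point of `L₀` on it lies on a
second line `q`; `q` has smaller slope, so it drops below `L₀` at column `c + 1`, and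
`B_c ⊂ B_{c+1}`. Finally `B_c` and `B_{c+1}` are unions of fibres of the
value map on a bad column, hence have even size.
-/

open Finset

lemma even_card_filter_of_even_card_fibers {α β : Type*} [DecidableEq β] (s : Finset α)
    (v : α → β) (P : β → Prop) [DecidablePred P]
    (h : ∀ y, Even #{x ∈ s | v x = y}) :
    Even #{x ∈ s | P (v x)} := by
  have hmaps :
      (({x ∈ s | P (v x)} : Finset α) : Set α).MapsTo v ({y ∈ s.image v | P y} : Finset β) := by
    intro x hx
    rw [mem_coe, mem_filter] at hx
    simpa using ⟨⟨x, hx.1, rfl⟩, hx.2⟩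
  have hfiber : ∀ y ∈ ({y ∈ s.image v | P y} : Finset β),
      #{x ∈ {x ∈ s | P (v x)} | v x = y} = #{x ∈ s | v x = y} :=
    fun y hy => congrArg card <| (filter_filter _ _ _).trans <| filter_congr fun x _ => by
      simp only [mem_filter] at hy
      exact ⟨And.right, fun hx => ⟨hx ▸ hy.2, hx⟩⟩
  rw [card_eq_sum_card_fiberwise hmaps, sum_congr rfl hfiber]
  exact even_iff_two_dvd.mpr <| dvd_sum fun y _ => (h y).two_dvd

lemma card_add_two_le_of_ssubset_of_even {α : Type*} {s t : Finset α} (hst : s ⊂ t)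
    (hs : Even #s) (ht : Even #t) : #s + 2 ≤ #t := by
  have := card_lt_card hst
  obtain ⟨m, hm⟩ := hs
  obtain ⟨n, hn⟩ := ht
  omega

lemma exists_mem_ne_of_even_card {α : Type*} {s : Finset α} {a : α} (hs : Even #s)
    (ha : a ∈ s) : ∃ b ∈ s, b ≠ a := by
  refine exists_mem_ne ?_ a
  obtain ⟨k, hk⟩ := hs
  have := card_pos.mpr ⟨a, ha⟩
  omega

/-- The key `p = (a, b)` encodes the line `z ↦ a + b z`. -/
def lineVal (p : ℕ × ℕ) (z : ℤ) : ℤ := p.1 + p.2 * z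

/-- `below S (a₀, b₀) c` is the set `B_c`. -/
def below (S : Finset (ℕ × ℕ)) (L : ℕ × ℕ) (z : ℤ) : Finset (ℕ × ℕ) :=
  S.filter fun p => lineVal p z < lineVal L z

lemma lineVal_add_one (p : ℕ × ℕ) (z : ℤ) : lineVal p (z + 1) = lineVal p z + p.2 := by
  unfold lineVal; ring

lemma eq_of_lineVal_eq_of_snd_eq {p q : ℕ × ℕ} {z : ℤ} (hval : lineVal p z = lineVal q z)
    (hslope : p.2 = q.2) : p = q := by
  unfold lineVal at hval
  rw [hslope] at hval
  exact Prod.ext (by exact_mod_cast add_right_cancel hval) hslope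

section below

variable {S : Finset (ℕ × ℕ)} {L : ℕ × ℕ} {z : ℤ}

lemma below_subset_below_add_one (hmax : ∀ p ∈ S, p.2 ≤ L.2) :
    below S L z ⊆ below S L (z + 1) := by
  intro p hp
  simp only [below, mem_filter, lineVal_add_one] at hp ⊢
  have : (p.2 : ℤ) ≤ L.2 := by exact_mod_cast hmax p hp.1
  exact ⟨hp.1, by linarith [hp.2]⟩

lemma even_card_below (hbad : ∀ y, Even #{p ∈ S | lineVal p z = y}) :
    Even #(below S L z) :=
  even_card_filter_of_even_card_fibers S (lineVal · z) (· < lineVal L z) hbad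

lemma below_ssubset_below_add_one (hL : L ∈ S) (hmax : ∀ p ∈ S, p.2 ≤ L.2)
    (hbad : ∀ y, Even #{p ∈ S | lineVal p z = y}) :
    below S L z ⊂ below S L (z + 1) := by
  obtain ⟨q, hq, hqL⟩ := exists_mem_ne_of_even_card (hbad (lineVal L z))
    (mem_filter.mpr ⟨hL, rfl⟩)
  obtain ⟨hqS, hqval⟩ := mem_filter.mp hq
  have hslope : (q.2 : ℤ) < L.2 := by
    refine lt_of_le_of_ne (by exact_mod_cast hmax q hqS) fun h => hqL ?_
    exact eq_of_lineVal_eq_of_snd_eq hqval (by exact_mod_cast h)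
  refine (ssubset_iff_of_subset (below_subset_below_add_one hmax)).mpr ⟨q, ?_, ?_⟩
  · simp only [below, mem_filter, lineVal_add_one, hqval]
    exact ⟨hqS, by linarith⟩
  · simp [below, hqval]

end below

theorem stmt_6_general (S : Finset (ℕ × ℕ))
    (a₀ b₀ : ℕ) (h0 : (a₀, b₀) ∈ S) (hmax : ∀ p ∈ S, p.2 ≤ b₀) (c : ℕ)
    (hbadc : ∀ y : ℤ,
      Even ((S.filter (fun p => (p.1 : ℤ) + (p.2 : ℤ) * (c : ℤ) = y)).card))
    (hbadc1 : ∀ y : ℤ,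
      Even ((S.filter (fun p => (p.1 : ℤ) + (p.2 : ℤ) * ((c : ℤ) + 1) = y)).card)) :
    (S.filter (fun p => (p.1 : ℤ) + (p.2 : ℤ) * (c : ℤ)
        < (a₀ : ℤ) + (b₀ : ℤ) * (c : ℤ))).card + 2
      ≤ (S.filter (fun p => (p.1 : ℤ) + (p.2 : ℤ) * ((c : ℤ) + 1)
        < (a₀ : ℤ) + (b₀ : ℤ) * ((c : ℤ) + 1))).card :=
  card_add_two_le_of_ssubset_of_even
    (below_ssubset_below_add_one (L := (a₀, b₀)) (z := c) h0 hmax hbadc)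
    (even_card_below (L := (a₀, b₀)) (z := c) hbadc)
    (even_card_below (L := (a₀, b₀)) (z := c + 1) hbadc1)

/-- Let S be a set of distinct lines z ↦ a + b·z (keys (a,b) ∈ ℕ²) of even cardinality,
and let (a₀,b₀) ∈ S have maximal slope. If columns c and c+1 are both bad for S (every
point of the column lies on an even number of lines of S), then the set B_c of lines
strictly below the line a₀ + b₀·z grows by at least 2 from column c to column c+1. -/
theorem stmt_6 (S : Finset (ℕ × ℕ)) (heven : Even S.card)
    (a₀ b₀ : ℕ) (h0 : (a₀, b₀) ∈ S) (hmax : ∀ p ∈ S, p.2 ≤ b₀) (c : ℕ)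
    (hbadc : ∀ y : ℤ,
      Even ((S.filter (fun p => (p.1 : ℤ) + (p.2 : ℤ) * (c : ℤ) = y)).card))
    (hbadc1 : ∀ y : ℤ,
      Even ((S.filter (fun p => (p.1 : ℤ) + (p.2 : ℤ) * ((c : ℤ) + 1) = y)).card)) :
    (S.filter (fun p => (p.1 : ℤ) + (p.2 : ℤ) * (c : ℤ)
        < (a₀ : ℤ) + (b₀ : ℤ) * (c : ℤ))).card + 2
      ≤ (S.filter (fun p => (p.1 : ℤ) + (p.2 : ℤ) * ((c : ℤ) + 1)
        < (a₀ : ℤ) + (b₀ : ℤ) * ((c : ℤ) + 1))).card :=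
  stmt_6_general S a₀ b₀ h0 hmax c hbadc hbadc1
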